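/- Suppose the form î is nondegenerate. Then for every central idempotent e ∈ ℚ[G], the restriction of the Reidemeister pairing η to the component e·H is nondegenerate: if x ∈ e·H satisfies η(x, y) = 0 for all y ∈ e·H, then x = 0. -/

import Mathlib

open Matrix Finset

/-- If `M ^ N = 1` over ℚ, then `trace M = trace (M ^ (N-1))`. -/
lemma trace_eq_trace_pow_pred {n : Type} [Fintype n] [DecidableEq n]
    (M : Matrix n n ℚ) (N : ℕ) (hN : 0 < N) (hM : M ^ N = 1) :
    M.trace = (M ^ (N - 1)).trace := by
  set P : Matrix n n ℚ := ∑ k ∈ range N, (M ^ k)ᵀ * M ^ k with hP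
  have hMM : M ^ (N - 1) * M = 1 := by
    rw [← pow_succ, Nat.sub_add_cancel hN, hM]
  have hMM' : M * M ^ (N - 1) = 1 := by
    rw [← pow_succ', Nat.sub_add_cancel hN, hM]
  -- invariance: Mᵀ * P * M = P
  have hinvP : Mᵀ * P * M = P := by
    have : Mᵀ * P * M = ∑ k ∈ range N, (M ^ (k + 1))ᵀ * M ^ (k + 1) := by
      rw [hP, Finset.mul_sum, Finset.sum_mul]
      refine Finset.sum_congr rfl fun k _ => ?_
      rw [pow_succ, transpose_mul]
      noncomm_ring
    rw [this]
    have h2 : ∑ k ∈ range (N + 1), (M ^ k)ᵀ * M ^ k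
        = (∑ k ∈ range N, (M ^ (k + 1))ᵀ * M ^ (k + 1)) + (M ^ 0)ᵀ * M ^ 0 :=
      Finset.sum_range_succ' _ N
    have h3 : ∑ k ∈ range (N + 1), (M ^ k)ᵀ * M ^ k
        = (∑ k ∈ range N, (M ^ k)ᵀ * M ^ k) + (M ^ N)ᵀ * M ^ N :=
      Finset.sum_range_succ _ N
    have h4 : (M ^ N)ᵀ * M ^ N = (M ^ 0)ᵀ * M ^ 0 := by rw [hM, pow_zero]
    rw [h3, h4] at h2
    exact (add_right_cancel h2.symm)
  -- P is invertible
  have hPunit : IsUnit P := by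
    rw [← Matrix.mulVec_injective_iff_isUnit]
    have key : ∀ x, P.mulVec x = 0 → x = 0 := by
      intro x hx
      have h0 : x ⬝ᵥ P.mulVec x = 0 := by rw [hx, dotProduct_zero]
      have hsumgen : ∀ m : ℕ, x ⬝ᵥ (∑ k ∈ range m, (M ^ k)ᵀ * M ^ k) *ᵥ x
          = ∑ k ∈ range m, (M ^ k *ᵥ x) ⬝ᵥ (M ^ k *ᵥ x) := by
        intro m
        induction m with
        | zero => simp
        | succ m ih =>
          rw [Finset.sum_range_succ, Finset.sum_range_succ, Matrix.add_mulVec,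
            dotProduct_add, ih, ← Matrix.mulVec_mulVec, Matrix.dotProduct_mulVec,
            Matrix.vecMul_transpose]
      have hsum : x ⬝ᵥ P *ᵥ x = ∑ k ∈ range N, (M ^ k *ᵥ x) ⬝ᵥ (M ^ k *ᵥ x) := by
        rw [hP]; exact hsumgen N
      have hnonneg : ∀ k ∈ range N, (0:ℚ) ≤ (M ^ k).mulVec x ⬝ᵥ (M ^ k).mulVec x := by
        intro k _
        exact Finset.sum_nonneg fun i _ => mul_self_nonneg _
      have hall := (Finset.sum_eq_zero_iff_of_nonneg hnonneg).mp (hsum ▸ h0)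
      have h00 := hall 0 (Finset.mem_range.mpr hN)
      rw [pow_zero, Matrix.one_mulVec] at h00
      funext i
      have := (Finset.sum_eq_zero_iff_of_nonneg
        (fun i _ => mul_self_nonneg (x i))).mp h00 i (Finset.mem_univ i)
      exact mul_self_eq_zero.mp this
    intro a b hab
    have : P.mulVec (a - b) = 0 := by
      rw [Matrix.mulVec_sub, hab, sub_self]
    exact sub_eq_zero.mp (key _ this)
  obtain ⟨Q, hQ⟩ := hPunit.exists_right_inv
  have hQP : Q * P = 1 := mul_eq_one_comm.mp hQ
  have h1 : Mᵀ * P = P * M ^ (N - 1) := by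
    calc Mᵀ * P = Mᵀ * P * (M * M ^ (N - 1)) := by rw [hMM', mul_one]
    _ = (Mᵀ * P * M) * M ^ (N - 1) := by noncomm_ring
    _ = P * M ^ (N - 1) := by rw [hinvP]
  calc M.trace = Mᵀ.trace := (Matrix.trace_transpose M).symm
    _ = (Mᵀ * (P * Q)).trace := by rw [hQ, mul_one]
    _ = (Mᵀ * P * Q).trace := by rw [mul_assoc]
    _ = (P * M ^ (N - 1) * Q).trace := by rw [h1]
    _ = (Q * P * M ^ (N - 1)).trace := by
        rw [Matrix.trace_mul_cycle]
    _ = (M ^ (N - 1)).trace := by rw [hQP, one_mul]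

open MonoidAlgebra in
/-- The matrix of left multiplication by `a` on `ℚ[G]` in the group basis. -/
def regMat {G : Type} [Group G] [Fintype G] [DecidableEq G]
    (a : MonoidAlgebra ℚ G) : Matrix G G ℚ :=
  Matrix.of fun h g => a.coeff (h * g⁻¹)

open MonoidAlgebra in
lemma regMat_mul {G : Type} [Group G] [Fintype G] [DecidableEq G]
    (a b : MonoidAlgebra ℚ G) : regMat (a * b) = regMat a * regMat b := by
  ext h g
  show (a * b).coeff (h * g⁻¹) = ∑ k, a.coeff (h * k⁻¹) * b.coeff (k * g⁻¹)
  rw [MonoidAlgebra.coeff_mul_apply_right, Finsupp.sum_fintype _ _ (fun c => by simp)]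
  refine Fintype.sum_equiv (Equiv.mulRight g) _ _ fun c => ?_
  simp only [Equiv.coe_mulRight]
  rw [_root_.mul_inv_rev, mul_inv_cancel_right, mul_assoc]

open MonoidAlgebra in
lemma regMat_one {G : Type} [Group G] [Fintype G] [DecidableEq G] :
    regMat (1 : MonoidAlgebra ℚ G) = 1 := by
  ext h g
  show (1 : MonoidAlgebra ℚ G).coeff (h * g⁻¹) = (1 : Matrix G G ℚ) h g
  rw [MonoidAlgebra.one_def, MonoidAlgebra.coeff_single_apply, Matrix.one_apply]
  by_cases hhg : h = g <;> simp [hhg, eq_comm, mul_inv_eq_one]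

open MonoidAlgebra in
lemma regMat_pow {G : Type} [Group G] [Fintype G] [DecidableEq G]
    (a : MonoidAlgebra ℚ G) (k : ℕ) : regMat (a ^ k) = regMat a ^ k := by
  induction k with
  | zero => simpa using regMat_one
  | succ k ih => rw [pow_succ, pow_succ, regMat_mul, ih]

open MonoidAlgebra in
lemma regMat_trace {G : Type} [Group G] [Fintype G] [DecidableEq G]
    (a : MonoidAlgebra ℚ G) : (regMat a).trace = (Fintype.card G : ℚ) * a.coeff 1 := by
  simp [Matrix.trace, Matrix.diag, regMat, Finset.sum_const, nsmul_eq_mul]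

open MonoidAlgebra in
/-- A central idempotent of `ℚ[G]` has symmetric coefficients: `e g⁻¹ = e g`. -/
lemma central_idem_coeff_inv {G : Type} [Group G] [Fintype G] [DecidableEq G]
    (e : MonoidAlgebra ℚ G) (he : e * e = e)
    (hecentral : ∀ a : MonoidAlgebra ℚ G, e * a = a * e) (g₀ : G) :
    e.coeff g₀⁻¹ = e.coeff g₀ := by
  set N := Fintype.card G with hNdef
  have hN : 0 < N := Fintype.card_pos
  have hg : g₀ ^ N = 1 := pow_card_eq_one
  set m : MonoidAlgebra ℚ G := e * MonoidAlgebra.single g₀ 1 + (1 - e) with hmdef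
  have hm : ∀ k : ℕ, m ^ k = e * MonoidAlgebra.single (g₀ ^ k) 1 + (1 - e) := by
    intro k
    induction k with
    | zero =>
      rw [pow_zero, pow_zero]
      rw [show MonoidAlgebra.single (1 : G) (1 : ℚ) = (1 : MonoidAlgebra ℚ G) from rfl,
        mul_one]
      abel
    | succ k ih =>
      rw [pow_succ, ih, hmdef]
      have hss : MonoidAlgebra.single (g₀ ^ k) (1:ℚ) * MonoidAlgebra.single g₀ 1
          = MonoidAlgebra.single (g₀ ^ (k+1)) 1 := by
        rw [MonoidAlgebra.single_mul_single, pow_succ, mul_one]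
      have hc := hecentral (MonoidAlgebra.single (g₀ ^ k) (1:ℚ))
      calc (e * MonoidAlgebra.single (g₀ ^ k) 1 + (1 - e))
            * (e * MonoidAlgebra.single g₀ 1 + (1 - e))
          = (MonoidAlgebra.single (g₀ ^ k) 1 * e + (1 - e))
            * (e * MonoidAlgebra.single g₀ 1 + (1 - e)) := by rw [hc]
        _ = MonoidAlgebra.single (g₀ ^ k) 1 * (e * e) * MonoidAlgebra.single g₀ 1
            + MonoidAlgebra.single (g₀ ^ k) 1 * (e * (1 - e))
            + ((1 - e) * e) * MonoidAlgebra.single g₀ 1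
            + (1 - e) * (1 - e) := by noncomm_ring
        _ = e * MonoidAlgebra.single (g₀ ^ (k+1)) 1 + (1 - e) := by
            rw [he]
            have h1 : e * (1 - e) = 0 := by rw [mul_sub, he, mul_one, sub_self]
            have h2 : (1 - e) * e = 0 := by rw [sub_mul, he, one_mul, sub_self]
            have h3 : (1 - e) * (1 - e) = 1 - e := by
              rw [sub_mul, mul_sub, mul_sub, he, one_mul, mul_one]; noncomm_ring
            rw [h1, h2, h3, mul_zero, zero_mul, add_zero, add_zero, ← hss, ← mul_assoc,
              ← hc, mul_assoc]
  have hmN : m ^ N = 1 := by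
    rw [hm N, hg]
    rw [show MonoidAlgebra.single (1 : G) (1 : ℚ) = (1 : MonoidAlgebra ℚ G) from rfl,
      mul_one]
    abel
  -- apply the trace lemma
  have hM : regMat m ^ N = 1 := by rw [← regMat_pow, hmN, regMat_one]
  have htr := trace_eq_trace_pow_pred (regMat m) N hN hM
  rw [← regMat_pow, regMat_trace, regMat_trace] at htr
  have hcard : (Fintype.card G : ℚ) ≠ 0 := Nat.cast_ne_zero.mpr Fintype.card_ne_zero
  have hcoeff : m.coeff 1 = (m ^ (N - 1)).coeff 1 := mul_left_cancel₀ hcard htr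
  have hpow : g₀ ^ (N - 1) = g₀⁻¹ := by
    have h : g₀ * g₀ ^ (N - 1) = 1 := by rw [← pow_succ', Nat.sub_add_cancel hN, hg]
    exact (inv_eq_of_mul_eq_one_right h).symm
  rw [hm (N-1), hpow] at hcoeff
  rw [hmdef] at hcoeff
  have l1 : (e * MonoidAlgebra.single g₀ (1:ℚ)).coeff 1 = e.coeff g₀⁻¹ := by
    rw [MonoidAlgebra.coeff_mul_single_apply]; simp
  have l2 : (e * MonoidAlgebra.single g₀⁻¹ (1:ℚ)).coeff 1 = e.coeff g₀ := by
    rw [MonoidAlgebra.coeff_mul_single_apply]; simp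
  rw [MonoidAlgebra.coeff_add, MonoidAlgebra.coeff_add, Finsupp.add_apply, Finsupp.add_apply, l1, l2] at hcoeff
  exact add_right_cancel hcoeff


/-- If the form `î` is nondegenerate, then for every central idempotent
`e` of ℚ[G] the restriction of the Reidemeister pairing to the component `e·H` is
nondegenerate. -/
theorem reidemeister_pairing_nondegenerate_on_component
    {G : Type} [Group G] [Fintype G]
    {H : Type} [AddCommGroup H] [Module ℚ H] [FiniteDimensional ℚ H]
    (ρ : Representation ℚ G H)
    (i : H →ₗ[ℚ] H →ₗ[ℚ] ℚ)
    (hinv : ∀ (g : G) (x y : H), i (ρ g x) (ρ g y) = i x y)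
    (hnd : ∀ x : H, (∀ y : H, i x y = 0) → x = 0)
    (η : H → H → MonoidAlgebra ℚ G)
    (hη : ∀ x y, η x y = ∑ g : G, MonoidAlgebra.single g (i x (ρ g y)))
    (e : MonoidAlgebra ℚ G)
    (he : e * e = e) (hecentral : ∀ a : MonoidAlgebra ℚ G, e * a = a * e) :
    ∀ x : H, ρ.asAlgebraHom e x = x →
      (∀ y : H, ρ.asAlgebraHom e y = y → η x y = 0) → x = 0 := by
  classical
  intro x hx hxy
  -- expansion of the action of the group algebra
  have hexp : ∀ (a : MonoidAlgebra ℚ G) (v : H),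
      ρ.asAlgebraHom a v = ∑ g : G, a.coeff g • ρ g v := by
    intro a v
    have ha : (∑ g : G, MonoidAlgebra.single g (a.coeff g)) = a :=
      (Finsupp.sum_fintype a.coeff (fun g r => MonoidAlgebra.single g r)
        (fun g => by simp)).symm.trans (MonoidAlgebra.sum_coeff_single a)
    calc ρ.asAlgebraHom a v
        = ρ.asAlgebraHom (∑ g : G, MonoidAlgebra.single g (a.coeff g)) v := by rw [ha]
      _ = ∑ g : G, a.coeff g • ρ g v := by
          rw [map_sum, LinearMap.sum_apply]
          refine Finset.sum_congr rfl fun g _ => ?_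
          rw [Representation.asAlgebraHom_single, LinearMap.smul_apply]
  -- e acts as identity on its own image
  have hee : ∀ y : H, ρ.asAlgebraHom e (ρ.asAlgebraHom e y) = ρ.asAlgebraHom e y := by
    intro y
    rw [← Module.End.mul_apply, ← _root_.map_mul, he]
  -- the pairing of x with anything in e·H vanishes
  have h2 : ∀ y : H, i x (ρ.asAlgebraHom e y) = 0 := by
    intro y
    have h0 := hxy _ (hee y)
    rw [hη] at h0
    have h1 := congrArg (fun a => a.coeff (1 : G)) h0
    simp only [MonoidAlgebra.coeff_sum, MonoidAlgebra.coeff_single, MonoidAlgebra.coeff_zero] at h1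
    rw [Finsupp.finset_sum_apply] at h1
    simp only [Finsupp.single_apply, Finsupp.coe_zero, Pi.zero_apply,
      Finset.sum_ite_eq' Finset.univ (1 : G), Finset.mem_univ, if_true] at h1
    simpa using h1
  -- invariance: adjoint of ρ g is ρ g⁻¹
  have hrho : ∀ (g : G) (z w : H), i (ρ g z) w = i z (ρ g⁻¹ w) := by
    intro g z w
    have hgw : ρ g (ρ g⁻¹ w) = w := by
      rw [← Module.End.mul_apply, ← _root_.map_mul, mul_inv_cancel, _root_.map_one, Module.End.one_apply]
    have h := hinv g z (ρ g⁻¹ w)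
    rwa [hgw] at h
  -- key computation
  have hkey : ∀ w : H, i x w = 0 := by
    intro w
    have e2 : i x w = ∑ g : G, e.coeff g * i x (ρ g⁻¹ w) := by
      conv_lhs => rw [← hx, hexp]
      rw [map_sum, LinearMap.sum_apply]
      refine Finset.sum_congr rfl fun g _ => ?_
      rw [_root_.map_smul, LinearMap.smul_apply, smul_eq_mul, hrho]
    have e3 : ∑ g : G, e.coeff g * i x (ρ g⁻¹ w) = ∑ g : G, e.coeff g * i x (ρ g w) := by
      refine Fintype.sum_equiv (Equiv.inv G) _ _ fun g => ?_
      simp only [Equiv.inv_apply]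
      rw [central_idem_coeff_inv e he hecentral g]
    have e4 : ∑ g : G, e.coeff g * i x (ρ g w) = i x (ρ.asAlgebraHom e w) := by
      rw [hexp, map_sum]
      refine Finset.sum_congr rfl fun g _ => ?_
      rw [_root_.map_smul, smul_eq_mul]
    rw [e2, e3, e4, h2]
  exact hnd x hkey
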